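/- Local central limit theorem for the rescaled simple random walk: if ^dp_t denotes the transition kernel of the rate-1 continuous-time simple symmetric random walk on ℤ and p_t the one-dimensional Gaussian heat kernel, then for every fixed t > 0, sup_{x ∈ ℤ} |n · ^dp_{n²t}(x) − p_t(x/n)| → 0 as n → ∞. -/

import Mathlib

/-!
Fourier inversion on the circle gives `^dp_t(x) = (2π)⁻¹ ∫_{-π}^{π} e^{-t(1 - cos θ)} cos(xθ) dθ`,
because `∫_{-π}^{π} cos^m θ cos(xθ) dθ = 2π · pathCount m x / 2^m` (both sides satisfy Pascal's
recursion in `m`). Substituting `θ = u/n`, `n · ^dp_{n²t}(x)` becomes the inverse Fourier transform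
at `x/n` of `e^{-n²t(1 - cos(u/n))}` cut off to `|u| ≤ nπ`, while `p_t(y)` is the inverse Fourier
transform of `e^{-tu²/2}`. Their difference is thus bounded, uniformly in `x`, by the `L¹` distance
of the two transforms, which tends to zero by dominated convergence: `1 - cos v ≥ 2v²/π²` on
`[-π, π]` provides the Gaussian majorant `e^{-2tu²/π²}`.
-/

/-- Number of nearest-neighbour paths of length `m` on `ℤ` from `0` to `x`. -/
def pathCount (m : ℕ) (x : ℤ) : ℕ :=
  if ((m : ℤ) + x) % 2 = 0 ∧ x.natAbs ≤ m then Nat.choose m (((m : ℤ) + x).toNat / 2) else 0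

/-- Transition kernel of the rate-1 continuous-time simple symmetric random walk on `ℤ`
(generator `(1/2)Δ`): `^dp_t(x) = P₀(X_t = x) = e^{-t} Σ_m (t^m/m!) P(S_m = x)`. -/
noncomputable def srwKernel (t : ℝ) (x : ℤ) : ℝ :=
  Real.exp (-t) * ∑' m : ℕ, t ^ m / (m.factorial : ℝ) * (pathCount m x : ℝ) / 2 ^ m

/-- The one-dimensional Gaussian heat kernel `p_t(x) = (2πt)^{-1/2} exp(-x²/(2t))`. -/
noncomputable def heatKernel (t x : ℝ) : ℝ :=
  (Real.sqrt (2 * Real.pi * t))⁻¹ * Real.exp (-(x ^ 2) / (2 * t))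

open Real Filter Topology MeasureTheory

lemma pathCount_two_mul_sub (m k : ℕ) : pathCount m (2 * k - m) = m.choose k := by
  unfold pathCount
  split_ifs with h
  · congr 1; omega
  · exact (Nat.choose_eq_zero_of_lt (by omega)).symm

lemma pathCount_eq_zero {m : ℕ} {x : ℤ} (hx : ∀ k : ℕ, x ≠ 2 * k - m) : pathCount m x = 0 := by
  unfold pathCount
  split_ifs with h
  · exact absurd (by omega) (hx ((m + x).toNat / 2))
  · rfl

lemma pathCount_zero (x : ℤ) : pathCount 0 x = if x = 0 then 1 else 0 := by
  unfold pathCount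
  split_ifs <;> first | omega | simp_all

lemma pathCount_succ (m : ℕ) (x : ℤ) :
    pathCount (m + 1) x = pathCount m (x - 1) + pathCount m (x + 1) := by
  by_cases hx : ∃ k : ℕ, x = 2 * k - (m + 1 : ℕ)
  · obtain ⟨k, rfl⟩ := hx
    rw [pathCount_two_mul_sub]
    cases k with
    | zero =>
      rw [pathCount_eq_zero (by omega),
        show 2 * ((0 : ℕ) : ℤ) - (m + 1 : ℕ) + 1 = 2 * (0 : ℕ) - m by omega,
        pathCount_two_mul_sub, zero_add, Nat.choose_zero_right, Nat.choose_zero_right]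
    | succ k =>
      rw [show 2 * ((k + 1 : ℕ) : ℤ) - (m + 1 : ℕ) - 1 = 2 * k - m by omega,
        show 2 * ((k + 1 : ℕ) : ℤ) - (m + 1 : ℕ) + 1 = 2 * (k + 1 : ℕ) - m by omega,
        pathCount_two_mul_sub, pathCount_two_mul_sub, Nat.choose_succ_succ']
  · simp only [not_exists] at hx
    rw [pathCount_eq_zero hx, pathCount_eq_zero fun k => by have := hx (k + 1); omega,
      pathCount_eq_zero fun k => by have := hx k; omega]

lemma integral_cos_int_mul (j : ℤ) :
    ∫ θ in (-π)..π, cos (j * θ) = if j = 0 then 2 * π else 0 := by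
  split_ifs with hj
  · simp [hj]; ring
  · have hj' : (j : ℝ) ≠ 0 := by exact_mod_cast hj
    rw [intervalIntegral.integral_comp_mul_left _ hj', integral_cos, mul_neg, sin_neg,
      sin_int_mul_pi, neg_zero, sub_zero, smul_zero]

lemma integral_cos_pow_mul_cos (m : ℕ) (x : ℤ) :
    ∫ θ in (-π)..π, cos θ ^ m * cos (x * θ) = 2 * π * pathCount m x / 2 ^ m := by
  induction m generalizing x with
  | zero =>
    rw [pathCount_zero]
    simp only [pow_zero, one_mul, integral_cos_int_mul]
    split_ifs <;> simp
  | succ m ih =>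
    have h (θ : ℝ) : cos θ ^ (m + 1) * cos (x * θ) =
        (cos θ ^ m * cos ((x - 1 : ℤ) * θ) + cos θ ^ m * cos ((x + 1 : ℤ) * θ)) / 2 := by
      push_cast
      rw [add_mul, sub_mul, one_mul, cos_add, cos_sub]
      ring
    simp_rw [h]
    rw [intervalIntegral.integral_div,
      intervalIntegral.integral_add (Continuous.intervalIntegrable (by fun_prop) _ _)
        (Continuous.intervalIntegrable (by fun_prop) _ _), ih, ih, pathCount_succ]
    push_cast
    ring

lemma hasSum_pow_div_factorial_exp (x : ℝ) :
    HasSum (fun n : ℕ => x ^ n / n.factorial) (exp x) := by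
  rw [exp_eq_exp_ℝ]
  exact NormedSpace.expSeries_div_hasSum_exp x

lemma srwKernel_eq_integral (t : ℝ) (x : ℤ) :
    srwKernel t x = (2 * π)⁻¹ * ∫ θ in (-π)..π, exp (-(t * (1 - cos θ))) * cos (x * θ) := by
  have hterm (m : ℕ) : t ^ m / m.factorial * pathCount m x / 2 ^ m =
      (2 * π)⁻¹ * ∫ θ in (-π)..π, t ^ m / m.factorial * (cos θ ^ m * cos (x * θ)) := by
    rw [intervalIntegral.integral_const_mul, integral_cos_pow_mul_cos]
    field_simp
  have hseries :
      HasSum (fun m : ℕ => ∫ θ in (-π)..π, t ^ m / m.factorial * (cos θ ^ m * cos (x * θ)))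
        (∫ θ in (-π)..π, exp (t * cos θ) * cos (x * θ)) := by
    refine intervalIntegral.hasSum_integral_of_dominated_convergence
      (fun m _ => |t| ^ m / m.factorial) (fun m => by fun_prop) (fun m => ?_)
      (.of_forall fun _ _ => Real.summable_pow_div_factorial |t|) intervalIntegrable_const
      (.of_forall fun θ _ => ?_)
    · refine .of_forall fun θ _ => ?_
      rw [norm_mul, norm_div, norm_pow, norm_mul, norm_pow, Real.norm_natCast, Real.norm_eq_abs]
      have hcos_pow : |cos θ| ^ m ≤ 1 := pow_le_one₀ (abs_nonneg _) (abs_cos_le_one _)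
      exact mul_le_of_le_one_right (by positivity)
        (mul_le_one₀ hcos_pow (abs_nonneg _) (abs_cos_le_one _))
    · have h (m : ℕ) : t ^ m / m.factorial * (cos θ ^ m * cos (x * θ)) =
          (t * cos θ) ^ m / m.factorial * cos (x * θ) := by ring
      simp_rw [h]
      exact (hasSum_pow_div_factorial_exp (t * cos θ)).mul_right _
  rw [srwKernel, tsum_congr hterm, tsum_mul_left, hseries.tsum_eq, mul_left_comm,
    ← intervalIntegral.integral_const_mul]
  congr 2
  ext θ
  rw [← mul_assoc, ← exp_add]
  ring_nf

lemma integral_cos_mul_exp_neg_mul_sq {b : ℝ} (hb : 0 < b) (y : ℝ) :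
    ∫ u, cos (y * u) * exp (-b * u ^ 2) = √(π / b) * exp (-y ^ 2 / (4 * b)) := by
  have hb' : 0 < (b : ℂ).re := by simpa using hb
  have hf : Integrable fun u : ℝ => Complex.exp (Complex.I * y * u) * Complex.exp (-b * u ^ 2) :=
    (integrable_cexp_quadratic hb' (Complex.I * y) 0).congr
      (.of_forall fun u => by simp only [add_zero, ← Complex.exp_add]; ring_nf)
  have h := congrArg Complex.re (fourierIntegral_gaussian hb' y)
  have hlhs (u : ℝ) : (Complex.exp (Complex.I * y * u) * Complex.exp (-b * u ^ 2)).re =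
      cos (y * u) * exp (-b * u ^ 2) := by
    rw [show Complex.I * y * u = ((y * u : ℝ) : ℂ) * Complex.I by push_cast; ring,
      show (-b * u ^ 2 : ℂ) = ((-b * u ^ 2 : ℝ) : ℂ) by push_cast; ring, ← Complex.ofReal_exp,
      Complex.re_mul_ofReal, Complex.exp_ofReal_mul_I_re]
  have hrhs : ((π : ℂ) / b) ^ (1 / 2 : ℂ) * Complex.exp (-(y : ℂ) ^ 2 / (4 * b)) =
      ((√(π / b) * exp (-y ^ 2 / (4 * b)) : ℝ) : ℂ) := by
    rw [sqrt_eq_rpow, Complex.ofReal_mul, Complex.ofReal_cpow (by positivity), Complex.ofReal_exp]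
    push_cast
    rfl
  have hre := integral_re hf
  simp only [RCLike.re_to_complex, hlhs] at hre
  rwa [← hre, hrhs, Complex.ofReal_re] at h

lemma heatKernel_eq_integral {t : ℝ} (ht : 0 < t) (y : ℝ) :
    heatKernel t y = (2 * π)⁻¹ * ∫ u, cos (y * u) * exp (-(t / 2) * u ^ 2) := by
  have hs : √(2 * π * t) ^ 2 = 2 * π * t := sq_sqrt (by positivity)
  have hsqrt : √(π / (t / 2)) = √(2 * π * t) / t := by
    rw [show π / (t / 2) = 2 * π * t / t ^ 2 by field_simp, sqrt_div' _ (by positivity),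
      sqrt_sq ht.le]
  rw [integral_cos_mul_exp_neg_mul_sq (by positivity), hsqrt, heatKernel]
  have hs_pos : 0 < √(2 * π * t) := by positivity
  field_simp
  rw [hs]
  ring_nf

noncomputable def rescaledSrwCharFun (t : ℝ) (n : ℕ) : ℝ → ℝ :=
  Set.indicator (Set.Ioc (-(n * π)) (n * π)) fun u => exp (-(n ^ 2 * t * (1 - cos (u / n))))

lemma mul_srwKernel_eq_integral (t : ℝ) {n : ℕ} (hn : n ≠ 0) (x : ℤ) :
    n * srwKernel (n ^ 2 * t) x = (2 * π)⁻¹ * ∫ u, cos (x / n * u) * rescaledSrwCharFun t n u := by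
  have hn' : (n : ℝ) ≠ 0 := Nat.cast_ne_zero.mpr hn
  have hwindow : -(n * π) ≤ n * π := neg_le_self (by positivity)
  have hwindow_integral : ∫ u, cos (x / n * u) * rescaledSrwCharFun t n u =
      ∫ u in -(n * π)..n * π, exp (-(n ^ 2 * t * (1 - cos (u / n)))) * cos (x * (u / n)) := by
    rw [intervalIntegral.integral_of_le hwindow, ← integral_indicator measurableSet_Ioc]
    congr 1 with u
    simp only [rescaledSrwCharFun, Set.indicator_apply]
    split_ifs <;> ring_nf
  rw [hwindow_integral, srwKernel_eq_integral, intervalIntegral.integral_comp_div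
    (fun θ => exp (-(n ^ 2 * t * (1 - cos θ))) * cos (x * θ)) hn', smul_eq_mul, neg_div,
    mul_div_cancel_left₀ _ hn']
  ring

lemma rescaledSrwCharFun_nonneg (t : ℝ) (n : ℕ) (u : ℝ) : 0 ≤ rescaledSrwCharFun t n u :=
  Set.indicator_nonneg (fun _ _ => (exp_pos _).le) u

lemma rescaledSrwCharFun_le {t : ℝ} (ht : 0 ≤ t) (n : ℕ) (u : ℝ) :
    rescaledSrwCharFun t n u ≤ exp (-(2 * t / π ^ 2) * u ^ 2) := by
  rw [rescaledSrwCharFun, Set.indicator_apply]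
  split_ifs with hu
  · have hn : (0 : ℝ) < n := by nlinarith [hu.1.trans_le hu.2, pi_pos]
    have hcos : cos (u / n) ≤ 1 - 2 / π ^ 2 * (u / n) ^ 2 := by
      refine cos_le_one_sub_mul_cos_sq ?_
      rw [abs_div, Nat.abs_cast, div_le_iff₀ hn, abs_le]
      constructor <;> linarith [hu.1, hu.2]
    have hrescale : 2 * t / π ^ 2 * u ^ 2 = n ^ 2 * t * (2 / π ^ 2 * (u / n) ^ 2) := by
      field_simp
    rw [exp_le_exp, neg_mul, hrescale, neg_le_neg_iff]
    exact mul_le_mul_of_nonneg_left (by linarith) (by positivity)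
  · exact (exp_pos _).le

lemma tendsto_sq_mul_one_sub_cos_div (u : ℝ) :
    Tendsto (fun n : ℕ => (n : ℝ) ^ 2 * (1 - cos (u / n))) atTop (𝓝 (u ^ 2 / 2)) := by
  have hsmall : ∀ᶠ n : ℕ in atTop, |u / n| ≤ 1 := by
    filter_upwards [(tendsto_const_div_atTop_nhds_zero_nat u).eventually
      (Metric.closedBall_mem_nhds 0 one_pos)] with n hn
    rwa [dist_zero_right, Real.norm_eq_abs] at hn
  have hbound : Tendsto (fun n : ℕ => u ^ 4 * (5 / 96) / (n : ℝ) ^ 2) atTop (𝓝 0) :=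
    tendsto_const_nhds.div_atTop ((tendsto_pow_atTop two_ne_zero).comp tendsto_natCast_atTop_atTop)
  refine tendsto_iff_norm_sub_tendsto_zero.2
    (squeeze_zero' (.of_forall fun _ => norm_nonneg _) ?_ hbound)
  filter_upwards [hsmall, eventually_ne_atTop 0] with n hn hn0
  have hn0' : (n : ℝ) ≠ 0 := Nat.cast_ne_zero.mpr hn0
  rw [Real.norm_eq_abs]
  calc |(n : ℝ) ^ 2 * (1 - cos (u / n)) - u ^ 2 / 2| =
        (n : ℝ) ^ 2 * |cos (u / n) - (1 - (u / n) ^ 2 / 2)| := by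
        rw [← abs_of_nonneg (sq_nonneg (n : ℝ)), ← abs_mul, abs_sq, ← abs_neg]
        congr 1
        field_simp
        ring
    _ ≤ (n : ℝ) ^ 2 * (|u / n| ^ 4 * (5 / 96)) := by gcongr; exact cos_bound hn
    _ = u ^ 4 * (5 / 96) / n ^ 2 := by
        rw [abs_div, Nat.abs_cast, div_pow, pow_abs, abs_of_nonneg (by positivity : 0 ≤ u ^ 4)]
        field_simp

lemma tendsto_rescaledSrwCharFun (t u : ℝ) :
    Tendsto (fun n => rescaledSrwCharFun t n u) atTop (𝓝 (exp (-(t / 2) * u ^ 2))) := by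
  have hwindow : ∀ᶠ n : ℕ in atTop, u ∈ Set.Ioc (-(n * π)) (n * π) := by
    filter_upwards [(tendsto_natCast_atTop_atTop.atTop_mul_const pi_pos).eventually_gt_atTop |u|]
      with n hn
    exact ⟨by linarith [neg_abs_le u], (le_abs_self u).trans hn.le⟩
  have hlim := ((tendsto_sq_mul_one_sub_cos_div u).const_mul t).neg.rexp
  rw [show -(t * (u ^ 2 / 2)) = -(t / 2) * u ^ 2 by ring] at hlim
  refine hlim.congr' ?_
  filter_upwards [hwindow] with n hn
  rw [rescaledSrwCharFun, Set.indicator_of_mem hn]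
  ring_nf

lemma integrable_rescaledSrwCharFun (t : ℝ) (n : ℕ) : Integrable (rescaledSrwCharFun t n) :=
  (integrable_indicator_iff measurableSet_Ioc).2 (Continuous.integrableOn_Ioc (by fun_prop))

lemma tendsto_integral_abs_rescaledSrwCharFun_sub {t : ℝ} (ht : 0 < t) :
    Tendsto (fun n => ∫ u, |rescaledSrwCharFun t n u - exp (-(t / 2) * u ^ 2)|) atTop (𝓝 0) := by
  have hdom (n : ℕ) (u : ℝ) :
      |rescaledSrwCharFun t n u - exp (-(t / 2) * u ^ 2)| ≤ exp (-(2 * t / π ^ 2) * u ^ 2) := by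
    refine abs_sub_le_of_nonneg_of_le (rescaledSrwCharFun_nonneg t n u)
      (rescaledSrwCharFun_le ht.le n u) (exp_pos _).le ?_
    have : 2 * t / π ^ 2 ≤ t / 2 := by
      rw [div_le_div_iff₀ (by positivity) two_pos]
      nlinarith [pi_gt_three, mul_lt_mul_of_pos_left pi_gt_three ht]
    rw [exp_le_exp, neg_mul, neg_mul, neg_le_neg_iff]
    exact mul_le_mul_of_nonneg_right this (sq_nonneg u)
  simpa using tendsto_integral_of_dominated_convergence _
    (fun n => ((integrable_rescaledSrwCharFun t n).sub
      (integrable_exp_neg_mul_sq (half_pos ht))).abs.aestronglyMeasurable)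
    (integrable_exp_neg_mul_sq (by positivity : 0 < 2 * t / π ^ 2))
    (fun n => .of_forall fun u => by rw [Real.norm_eq_abs, abs_abs]; exact hdom n u)
    (.of_forall fun u => ((tendsto_rescaledSrwCharFun t u).sub_const _).abs)

lemma abs_integral_cos_mul_sub_le {f g : ℝ → ℝ} (hf : Integrable f) (hg : Integrable g)
    (a : ℝ) :
    |(∫ u, cos (a * u) * f u) - ∫ u, cos (a * u) * g u| ≤ ∫ u, |f u - g u| := by
  have hcos : AEStronglyMeasurable (fun u => cos (a * u)) := by fun_prop
  have hbdd : ∀ᵐ u, ‖cos (a * u)‖ ≤ 1 := .of_forall fun u => abs_cos_le_one _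
  rw [← integral_sub (hf.bdd_mul hcos hbdd) (hg.bdd_mul hcos hbdd), ← Real.norm_eq_abs]
  refine norm_integral_le_of_norm_le (hf.sub hg).abs (.of_forall fun u => ?_)
  rw [← mul_sub, norm_mul]
  exact mul_le_of_le_one_left (abs_nonneg _) (abs_cos_le_one _)

/-- Local central limit theorem for the diffusively rescaled simple random walk: for every
`t > 0`, `sup_{x ∈ ℤ} |n · ^dp_{n²t}(x) − p_t(x/n)| → 0` as `n → ∞`. -/
theorem srw_local_clt (t : ℝ) (ht : 0 < t) :
    ∀ δ > (0 : ℝ), ∃ N : ℕ, ∀ n : ℕ, N ≤ n → ∀ x : ℤ,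
      |(n : ℝ) * srwKernel ((n : ℝ) ^ 2 * t) x - heatKernel t ((x : ℝ) / n)| ≤ δ := by
  intro δ hδ
  obtain ⟨N, hN⟩ := eventually_atTop.1 <| (tendsto_integral_abs_rescaledSrwCharFun_sub ht)
    |>.eventually_le_const (by positivity : 0 < 2 * π * δ)
  refine ⟨max N 1, fun n hn x => ?_⟩
  calc |(n : ℝ) * srwKernel ((n : ℝ) ^ 2 * t) x - heatKernel t ((x : ℝ) / n)|
      = (2 * π)⁻¹ * |(∫ u, cos (x / n * u) * rescaledSrwCharFun t n u)
          - ∫ u, cos (x / n * u) * exp (-(t / 2) * u ^ 2)| := by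
        rw [mul_srwKernel_eq_integral t (by omega) x, heatKernel_eq_integral ht, ← mul_sub,
          abs_mul, abs_of_pos (by positivity)]
    _ ≤ (2 * π)⁻¹ * ∫ u, |rescaledSrwCharFun t n u - exp (-(t / 2) * u ^ 2)| := by
        gcongr
        exact abs_integral_cos_mul_sub_le (integrable_rescaledSrwCharFun t n)
          (integrable_exp_neg_mul_sq (half_pos ht)) _
    _ ≤ (2 * π)⁻¹ * (2 * π * δ) := by gcongr; exact hN n (le_of_max_le_left hn)
    _ = δ := by field_simp
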